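/- Let ABCD be a convex quadrilateral in the Euclidean plane ℝ² such that lines AB and CD are not parallel, lines AD and BC are not parallel, and the midpoint M of AC differs from the midpoint N of BD. Suppose there is a point I, interior to the convex hull of {A,B,C,D}, collinear with M and N, such that the distance from I to the line AB equals the distance from I to the line CD, and the distance from I to the line BC equals the distance from I to the line DA. Then either ABCD is tangential (there is an interior point equidistant from all four side lines) or the four points A, B, C, D are concyclic. -/

import Mathlib

/-- Distance from a point P to the line through X and Y. -/
noncomputable def distToLine (P X Y : EuclideanSpace ℝ (Fin 2)) : ℝ :=
  Metric.infDist P (affineSpan ℝ ({X, Y} : Set (EuclideanSpace ℝ (Fin 2))) :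
    Set (EuclideanSpace ℝ (Fin 2)))

/-- A, B, C, D are in convex position: no vertex lies in the convex hull of the
other three. -/
def ConvexPosition (A B C D : EuclideanSpace ℝ (Fin 2)) : Prop :=
  (A ∉ convexHull ℝ ({B, C, D} : Set (EuclideanSpace ℝ (Fin 2)))) ∧
  (B ∉ convexHull ℝ ({A, C, D} : Set (EuclideanSpace ℝ (Fin 2)))) ∧
  (C ∉ convexHull ℝ ({A, B, D} : Set (EuclideanSpace ℝ (Fin 2)))) ∧
  (D ∉ convexHull ℝ ({A, B, C} : Set (EuclideanSpace ℝ (Fin 2))))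

/-- ABCD is tangential: some interior point of the quadrilateral is
equidistant from all four side lines. -/
def IsTangential (A B C D : EuclideanSpace ℝ (Fin 2)) : Prop :=
  ∃ J ∈ interior (convexHull ℝ
      ({A, B, C, D} : Set (EuclideanSpace ℝ (Fin 2)))),
    distToLine J A B = distToLine J B C ∧
    distToLine J B C = distToLine J C D ∧
    distToLine J C D = distToLine J D A


local notation "Pt" => EuclideanSpace ℝ (Fin 2)

private lemma sq_eq_of_nonneg {a b : ℝ} (ha : 0 ≤ a) (hb : 0 ≤ b) (h : a ^ 2 = b ^ 2) : a = b := by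
  rw [← Real.sqrt_sq ha, ← Real.sqrt_sq hb, h]

private lemma pt_dist_sq (X Y : Pt) :
    dist X Y ^ 2 = (X 0 - Y 0) ^ 2 + (X 1 - Y 1) ^ 2 := by
  rw [EuclideanSpace.dist_eq, Real.sq_sqrt (by positivity)]
  simp [Fin.sum_univ_two, Real.dist_eq, sq_abs]

private lemma pt_dist_eq (X Y : Pt) :
    dist X Y = Real.sqrt ((X 0 - Y 0) ^ 2 + (X 1 - Y 1) ^ 2) := by
  rw [← pt_dist_sq, Real.sqrt_sq dist_nonneg]

private lemma cross_le (u0 u1 v0 v1 : ℝ) :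
    |u0 * v1 - u1 * v0| ≤ Real.sqrt (u0 ^ 2 + u1 ^ 2) * Real.sqrt (v0 ^ 2 + v1 ^ 2) := by
  rw [← Real.sqrt_mul (by positivity), ← Real.sqrt_sq_eq_abs]
  apply Real.sqrt_le_sqrt
  nlinarith [sq_nonneg (u0 * v0 + u1 * v1)]

private lemma distToLine_mul (P X Y : Pt) (h : X ≠ Y) :
    distToLine P X Y * dist X Y
      = |(Y 0 - X 0) * (P 1 - X 1) - (Y 1 - X 1) * (P 0 - X 0)| := by
  have hL : (0:ℝ) < dist X Y := dist_pos.2 (fun e => h e)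
  have hU : (X 0 - Y 0) ^ 2 + (X 1 - Y 1) ^ 2 ≠ 0 := by
    rw [← pt_dist_sq]; positivity
  set c : ℝ := (Y 0 - X 0) * (P 1 - X 1) - (Y 1 - X 1) * (P 0 - X 0) with hc
  set t : ℝ := ((P 0 - X 0) * (Y 0 - X 0) + (P 1 - X 1) * (Y 1 - X 1)) /
      ((X 0 - Y 0) ^ 2 + (X 1 - Y 1) ^ 2) with ht
  have hXmem : X ∈ (affineSpan ℝ ({X, Y} : Set Pt) : Set Pt) :=
    left_mem_affineSpan_pair ℝ X Y
  have hQmem : t • (Y - X) + X ∈ (affineSpan ℝ ({X, Y} : Set Pt) : Set Pt) := by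
    have : t • (Y -ᵥ X) +ᵥ X ∈ affineSpan ℝ ({X, Y} : Set Pt) :=
      (vadd_left_mem_affineSpan_pair).2 ⟨t, rfl⟩
    simpa [vsub_eq_sub, vadd_eq_add, add_comm] using this
  have e0 : (t • (Y - X) + X) 0 = t * (Y 0 - X 0) + X 0 := rfl
  have e1 : (t • (Y - X) + X) 1 = t * (Y 1 - X 1) + X 1 := rfl
  have hdQ : dist P (t • (Y - X) + X) = |c| / dist X Y := by
    apply sq_eq_of_nonneg dist_nonneg (by positivity)
    rw [div_pow, _root_.sq_abs, pt_dist_sq, e0, e1, pt_dist_sq X Y, ht, hc]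
    field_simp
    ring
  have upper : distToLine P X Y ≤ |c| / dist X Y := by
    rw [← hdQ]; exact Metric.infDist_le_dist_of_mem hQmem
  have lower : |c| / dist X Y ≤ distToLine P X Y := by
    have hne : Nonempty (affineSpan ℝ ({X, Y} : Set Pt) : Set Pt) := ⟨⟨X, hXmem⟩⟩
    rw [distToLine, Metric.infDist_eq_iInf]
    apply le_ciInf
    rintro ⟨Q, hQ⟩
    have hQ' : (Q - X) +ᵥ X ∈ affineSpan ℝ ({X, Y} : Set Pt) := by
      simpa [vadd_eq_add, sub_add_cancel] using hQ
    obtain ⟨rr, hrr⟩ := (vadd_left_mem_affineSpan_pair).1 hQ'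
    rw [vsub_eq_sub] at hrr
    have h0 : Q 0 - X 0 = rr * (Y 0 - X 0) := by
      have := congrArg (· 0) hrr; simpa using this.symm
    have h1 : Q 1 - X 1 = rr * (Y 1 - X 1) := by
      have := congrArg (· 1) hrr; simpa using this.symm
    have hPQ : |c| = |(Y 0 - X 0) * (P 1 - Q 1) - (Y 1 - X 1) * (P 0 - Q 0)| := by
      rw [hc]
      congr 1
      linear_combination (Y 0 - X 0) * h1 - (Y 1 - X 1) * h0
    rw [div_le_iff₀ hL, hPQ]
    show _ ≤ dist P Q * dist X Y
    calc |(Y 0 - X 0) * (P 1 - Q 1) - (Y 1 - X 1) * (P 0 - Q 0)|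
        ≤ Real.sqrt ((Y 0 - X 0) ^ 2 + (Y 1 - X 1) ^ 2) *
          Real.sqrt ((P 0 - Q 0) ^ 2 + (P 1 - Q 1) ^ 2) := cross_le _ _ _ _
      _ = dist Y X * dist P Q := by rw [pt_dist_eq Y X, pt_dist_eq P Q]
      _ = dist P Q * dist X Y := by rw [dist_comm Y X, dist_comm P Q]; ring
  have : distToLine P X Y = |c| / dist X Y := le_antisymm upper lower
  rw [this, div_mul_cancel₀]
  exact hL.ne'



private lemma smul_of_cross_eq_zero {u v : Pt} (hu : u ≠ 0)
    (h : u 0 * v 1 - u 1 * v 0 = 0) : ∃ t : ℝ, v = t • u := by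
  have hcomp : u 0 ≠ 0 ∨ u 1 ≠ 0 := by
    by_contra hcon
    push_neg at hcon
    apply hu
    ext i
    fin_cases i
    · exact hcon.1
    · exact hcon.2
  rcases hcomp with h0 | h0
  · refine ⟨v 0 / u 0, ?_⟩
    ext i
    fin_cases i
    · show v 0 = v 0 / u 0 * u 0
      field_simp
    · show v 1 = v 0 / u 0 * u 1
      field_simp
      linear_combination h
  · refine ⟨v 1 / u 1, ?_⟩
    ext i
    fin_cases i
    · show v 0 = v 1 / u 1 * u 0
      field_simp
      linear_combination -h
    · show v 1 = v 1 / u 1 * u 1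
      field_simp

private lemma cross_of_collinear {P Q R : Pt} (h : Collinear ℝ ({P, Q, R} : Set Pt)) :
    (Q 0 - P 0) * (R 1 - P 1) - (Q 1 - P 1) * (R 0 - P 0) = 0 := by
  obtain ⟨v, hv⟩ := (collinear_iff_of_mem (Set.mem_insert P {Q, R})).1 h
  obtain ⟨rq, hq⟩ := hv Q (by simp)
  obtain ⟨rr, hr⟩ := hv R (by simp)
  have hq0 : Q 0 - P 0 = rq * v 0 := by
    rw [hq]; show rq * v 0 + P 0 - P 0 = rq * v 0; ring
  have hq1 : Q 1 - P 1 = rq * v 1 := by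
    rw [hq]; show rq * v 1 + P 1 - P 1 = rq * v 1; ring
  have hr0 : R 0 - P 0 = rr * v 0 := by
    rw [hr]; show rr * v 0 + P 0 - P 0 = rr * v 0; ring
  have hr1 : R 1 - P 1 = rr * v 1 := by
    rw [hr]; show rr * v 1 + P 1 - P 1 = rr * v 1; ring
  rw [hq0, hq1, hr0, hr1]; ring

private lemma collinear_of_cross {P Q R : Pt}
    (h : (Q 0 - P 0) * (R 1 - P 1) - (Q 1 - P 1) * (R 0 - P 0) = 0) :
    Collinear ℝ ({P, Q, R} : Set Pt) := by
  by_cases hPQ : Q = P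
  · rw [hPQ, Set.insert_idem]
    exact collinear_pair ℝ P R
  · have hu : Q - P ≠ 0 := sub_ne_zero.2 hPQ
    obtain ⟨t, ht⟩ := smul_of_cross_eq_zero hu
      (show (Q - P) 0 * (R - P) 1 - (Q - P) 1 * (R - P) 0 = 0 from h) (v := R - P)
    apply (collinear_iff_of_mem (Set.mem_insert P {Q, R})).2
    refine ⟨Q - P, ?_⟩
    intro x hx
    simp only [Set.mem_insert_iff, Set.mem_singleton_iff] at hx
    rcases hx with rfl | rfl | rfl
    · exact ⟨0, by simp⟩
    · exact ⟨1, by simp [vadd_eq_add, sub_add_cancel]⟩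
    · exact ⟨t, by rw [← ht]; simp [vadd_eq_add, sub_add_cancel]⟩

private lemma parallel_of_cross {X Y Z W : Pt} (hXY : X ≠ Y) (hZW : Z ≠ W)
    (h : (Y 0 - X 0) * (W 1 - Z 1) - (Y 1 - X 1) * (W 0 - Z 0) = 0) :
    (affineSpan ℝ ({X, Y} : Set Pt)).Parallel (affineSpan ℝ ({Z, W} : Set Pt)) := by
  rw [AffineSubspace.parallel_iff_direction_eq_and_eq_bot_iff_eq_bot]
  constructor
  · rw [direction_affineSpan, direction_affineSpan, vectorSpan_pair, vectorSpan_pair]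
    obtain ⟨t, ht⟩ := smul_of_cross_eq_zero (u := Y - X) (v := W - Z)
      (sub_ne_zero.2 (Ne.symm hXY))
      (show (Y - X) 0 * (W - Z) 1 - (Y - X) 1 * (W - Z) 0 = 0 from h)
    have htne : t ≠ 0 := by
      rintro rfl
      exact sub_ne_zero.2 (Ne.symm hZW) (by simpa using ht)
    have e1 : X -ᵥ Y = (-1 : ℝ) • (Y - X) := by
      rw [vsub_eq_sub, neg_smul, one_smul, neg_sub]
    have e2 : Z -ᵥ W = (-t) • (Y - X) := by
      rw [vsub_eq_sub, neg_smul, ← ht, neg_sub]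
    rw [e1, e2,
      Submodule.span_singleton_smul_eq (isUnit_iff_ne_zero.2 (by norm_num : (-1:ℝ) ≠ 0)) _,
      Submodule.span_singleton_smul_eq (isUnit_iff_ne_zero.2 (neg_ne_zero.2 htne)) _]
  · simp only [affineSpan_eq_bot]
    exact iff_of_false (Set.Nonempty.ne_empty ⟨X, by simp⟩)
      (Set.Nonempty.ne_empty ⟨Z, by simp⟩)

private lemma midpoint_coord (X Y : Pt) (i : Fin 2) :
    midpoint ℝ X Y i = (X i + Y i) / 2 := by
  rw [midpoint_eq_smul_add]
  show (⅟(2:ℝ)) * (X i + Y i) = _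
  rw [invOf_eq_inv]; ring


theorem core_abs (p q r s c12 s12 c23 s23 c34 s34 c41 s41 U V W Z d2 e2 S13 S24 : ℝ)
    (hUne : U ≠ 0) (hVne : V ≠ 0) (hWne : W ≠ 0) (hZne : Z ≠ 0)
    (hS1 : U * s12 * s41 = (q * U - p * c12) * s41 + (s * U - p * c41) * s12)
    (hS2 : V * s12 * s23 = (r * V - q * c23) * s12 + (p * V - q * c12) * s23)
    (hS3 : W * s23 * s34 = (s * W - r * c34) * s23 + (q * W - r * c23) * s34)
    (hS4 : Z * s34 * s41 = (p * Z - s * c41) * s34 + (r * Z - s * c34) * s41)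
    (hId1 : c12 * s34 + s12 * c34 + c41 * s23 + s41 * c23 = 0)
    (hId6 : s23 * s41 - s12 * s34 + S13 * S24 = 0)
    (hd2p : p ^ 2 = d2 * U) (hd2r : r ^ 2 = d2 * W)
    (he2q : q ^ 2 = e2 * V) (he2s : s ^ 2 = e2 * Z)
    (hAnne : p + r - q - s = 0) :
    (e2 - d2) * (c12 * s34 + s12 * c34) * S13 * S24 = 0 := by
  have R1 : p * s12 * s41 = (p * q - d2 * c12) * s41 + (p * s - d2 * c41) * s12 :=
    mul_left_cancel₀ hUne (by linear_combination p * hS1 + (-(c12 * s41) - c41 * s12) * hd2p)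
  have R2 : q * s12 * s23 = (q * r - e2 * c23) * s12 + (p * q - e2 * c12) * s23 :=
    mul_left_cancel₀ hVne (by linear_combination q * hS2 + (-(c23 * s12) - c12 * s23) * he2q)
  have R3 : r * s23 * s34 = (r * s - d2 * c34) * s23 + (q * r - d2 * c23) * s34 :=
    mul_left_cancel₀ hWne (by linear_combination r * hS3 + (-(c34 * s23) - c23 * s34) * hd2r)
  have R4 : s * s34 * s41 = (p * s - e2 * c41) * s34 + (r * s - e2 * c34) * s41 :=
    mul_left_cancel₀ hZne (by linear_combination s * hS4 + (-(c41 * s34) - c34 * s41) * he2s)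
  linear_combination (s23 * s34) * R1 - (s34 * s41) * R2 + (s41 * s12) * R3 - (s12 * s23) * R4
    - (s12 * s23 * s34 * s41) * hAnne + ((e2 - d2) * s12 * s34) * hId1
    + ((e2 - d2) * (c12 * s34 + s12 * c34)) * hId6

set_option maxRecDepth 100000 in
set_option maxHeartbeats 1000000 in
private lemma circum_scalar (a0 a1 b0 b1 c0 c1 d0 d1 : ℝ)
    (hΔ : ((b0 - a0) * (c1 - a1) - (b1 - a1) * (c0 - a0)) ≠ 0)
    (hS : ((b0 - a0) * (c0 - b0) + (b1 - a1) * (c1 - b1)) * ((d0 - c0) * (a1 - d1) - (d1 - c1) * (a0 - d0)) + ((b0 - a0) * (c1 - b1) - (b1 - a1) * (c0 - b0)) * ((d0 - c0) * (a0 - d0) + (d1 - c1) * (a1 - d1)) = 0) :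
    ∃ o0 o1 : ℝ,
      (o0 - b0) ^ 2 + (o1 - b1) ^ 2 = (o0 - a0) ^ 2 + (o1 - a1) ^ 2 ∧
      (o0 - c0) ^ 2 + (o1 - c1) ^ 2 = (o0 - a0) ^ 2 + (o1 - a1) ^ 2 ∧
      (o0 - d0) ^ 2 + (o1 - d1) ^ 2 = (o0 - a0) ^ 2 + (o1 - a1) ^ 2 := by
  refine ⟨(((b0 ^ 2 + b1 ^ 2 - a0 ^ 2 - a1 ^ 2) * (c1 - a1) - (c0 ^ 2 + c1 ^ 2 - a0 ^ 2 - a1 ^ 2) * (b1 - a1)) / (2 * ((b0 - a0) * (c1 - a1) - (b1 - a1) * (c0 - a0)))), (((c0 ^ 2 + c1 ^ 2 - a0 ^ 2 - a1 ^ 2) * (b0 - a0) - (b0 ^ 2 + b1 ^ 2 - a0 ^ 2 - a1 ^ 2) * (c0 - a0)) / (2 * ((b0 - a0) * (c1 - a1) - (b1 - a1) * (c0 - a0)))), ?_, ?_, ?_⟩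
  · obtain ⟨k, hk⟩ : ∃ k : ℝ, k = (2 * ((b0 - a0) * (c1 - a1) - (b1 - a1) * (c0 - a0))) := ⟨_, rfl⟩
    have hk0 : k ≠ 0 := hk ▸ mul_ne_zero two_ne_zero hΔ
    rw [← hk]
    field_simp
    subst hk
    ring
  · obtain ⟨k, hk⟩ : ∃ k : ℝ, k = (2 * ((b0 - a0) * (c1 - a1) - (b1 - a1) * (c0 - a0))) := ⟨_, rfl⟩
    have hk0 : k ≠ 0 := hk ▸ mul_ne_zero two_ne_zero hΔ
    rw [← hk]
    field_simp
    subst hk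
    ring
  · have h2 : (2 * ((b0 - a0) * (c1 - a1) - (b1 - a1) * (c0 - a0))) ≠ 0 := mul_ne_zero two_ne_zero hΔ
    have key : (((((b0 ^ 2 + b1 ^ 2 - a0 ^ 2 - a1 ^ 2) * (c1 - a1) - (c0 ^ 2 + c1 ^ 2 - a0 ^ 2 - a1 ^ 2) * (b1 - a1)) / (2 * ((b0 - a0) * (c1 - a1) - (b1 - a1) * (c0 - a0)))) - d0) ^ 2 + ((((c0 ^ 2 + c1 ^ 2 - a0 ^ 2 - a1 ^ 2) * (b0 - a0) - (b0 ^ 2 + b1 ^ 2 - a0 ^ 2 - a1 ^ 2) * (c0 - a0)) / (2 * ((b0 - a0) * (c1 - a1) - (b1 - a1) * (c0 - a0)))) - d1) ^ 2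
        - (((((b0 ^ 2 + b1 ^ 2 - a0 ^ 2 - a1 ^ 2) * (c1 - a1) - (c0 ^ 2 + c1 ^ 2 - a0 ^ 2 - a1 ^ 2) * (b1 - a1)) / (2 * ((b0 - a0) * (c1 - a1) - (b1 - a1) * (c0 - a0)))) - a0) ^ 2 + ((((c0 ^ 2 + c1 ^ 2 - a0 ^ 2 - a1 ^ 2) * (b0 - a0) - (b0 ^ 2 + b1 ^ 2 - a0 ^ 2 - a1 ^ 2) * (c0 - a0)) / (2 * ((b0 - a0) * (c1 - a1) - (b1 - a1) * (c0 - a0)))) - a1) ^ 2)) * (2 * ((b0 - a0) * (c1 - a1) - (b1 - a1) * (c0 - a0)))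
        = -2 * (((b0 - a0) * (c0 - b0) + (b1 - a1) * (c1 - b1)) * ((d0 - c0) * (a1 - d1) - (d1 - c1) * (a0 - d0)) + ((b0 - a0) * (c1 - b1) - (b1 - a1) * (c0 - b0)) * ((d0 - c0) * (a0 - d0) + (d1 - c1) * (a1 - d1))) := by
      obtain ⟨k, hk⟩ : ∃ k : ℝ, k = (2 * ((b0 - a0) * (c1 - a1) - (b1 - a1) * (c0 - a0))) := ⟨_, rfl⟩
      have hk0 : k ≠ 0 := hk ▸ mul_ne_zero two_ne_zero hΔ
      rw [← hk]
      field_simp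
      subst hk
      ring
    rw [hS, mul_zero] at key
    have hz := (mul_eq_zero.1 key).resolve_right h2
    linarith

set_option maxHeartbeats 1000000 in
/-- **Theorem 8.** Let ABCD be a convex quadrilateral with AB ∦ CD, AD ∦ BC
and distinct diagonal midpoints M ≠ N. If an interior point I on the Newton
line MN is equidistant from lines AB and CD and also equidistant from lines
BC and DA (the two incenters coincide), then ABCD is tangential or its
vertices are concyclic. -/
theorem coincident_incenters_tangential_or_cyclic
    (A B C D I : EuclideanSpace ℝ (Fin 2))
    (hconv : ConvexPosition A B C D)
    (hnpar₁ : ¬ (affineSpan ℝ ({A, B} : Set (EuclideanSpace ℝ (Fin 2)))).Parallel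
      (affineSpan ℝ ({C, D} : Set (EuclideanSpace ℝ (Fin 2)))))
    (hnpar₂ : ¬ (affineSpan ℝ ({A, D} : Set (EuclideanSpace ℝ (Fin 2)))).Parallel
      (affineSpan ℝ ({B, C} : Set (EuclideanSpace ℝ (Fin 2)))))
    (hMN : midpoint ℝ A C ≠ midpoint ℝ B D)
    (hI : I ∈ interior (convexHull ℝ
      ({A, B, C, D} : Set (EuclideanSpace ℝ (Fin 2)))))
    (hNewton : Collinear ℝ ({I, midpoint ℝ A C, midpoint ℝ B D} :
      Set (EuclideanSpace ℝ (Fin 2))))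
    (h₁ : distToLine I A B = distToLine I C D)
    (h₂ : distToLine I B C = distToLine I D A) :
    IsTangential A B C D ∨
      ∃ (O : EuclideanSpace ℝ (Fin 2)) (R : ℝ),
        dist O A = R ∧ dist O B = R ∧ dist O C = R ∧ dist O D = R := by
  classical
  obtain ⟨hA, hB, hC, hD⟩ := hconv
  have hABne : A ≠ B := fun e => hA (subset_convexHull ℝ _ (by rw [e]; exact Set.mem_insert _ _))
  have hBCne : B ≠ C := fun e => hB (subset_convexHull ℝ _ (by rw [e]; simp))
  have hCDne : C ≠ D := fun e => hC (subset_convexHull ℝ _ (by rw [e]; simp))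
  have hDAne : D ≠ A := fun e => hD (subset_convexHull ℝ _ (by rw [e]; exact Set.mem_insert _ _))
  have hncABC : ¬ Collinear ℝ ({A, B, C} : Set (EuclideanSpace ℝ (Fin 2))) := by
    intro hcol
    rcases hcol.wbtw_or_wbtw_or_wbtw with hw | hw | hw
    · refine hB (convexHull_mono ?_ (by rw [convexHull_pair]; exact hw.mem_segment))
      intro x hx
      simp only [Set.mem_insert_iff, Set.mem_singleton_iff] at hx
      rcases hx with rfl | rfl
      · exact Set.mem_insert _ _
      · simp
    · refine hC (convexHull_mono ?_ (by rw [convexHull_pair]; exact hw.mem_segment))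
      intro x hx
      simp only [Set.mem_insert_iff, Set.mem_singleton_iff] at hx
      rcases hx with rfl | rfl
      · simp
      · exact Set.mem_insert _ _
    · refine hA (convexHull_mono ?_ (by rw [convexHull_pair]; exact hw.mem_segment))
      intro x hx
      simp only [Set.mem_insert_iff, Set.mem_singleton_iff] at hx
      rcases hx with rfl | rfl
      · simp
      · exact Set.mem_insert _ _
  set dd := distToLine I A B with hdd
  set ee := distToLine I B C with hee
  have EAB : dd * dist A B = |((B 0 - A 0) * (I 1 - A 1) - (B 1 - A 1) * (I 0 - A 0))| := distToLine_mul I A B hABne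
  have EBC : ee * dist B C = |((C 0 - B 0) * (I 1 - B 1) - (C 1 - B 1) * (I 0 - B 0))| := distToLine_mul I B C hBCne
  have ECD : dd * dist C D = |((D 0 - C 0) * (I 1 - C 1) - (D 1 - C 1) * (I 0 - C 0))| := by rw [h₁]; exact distToLine_mul I C D hCDne
  have EDA : ee * dist D A = |((A 0 - D 0) * (I 1 - D 1) - (A 1 - D 1) * (I 0 - D 0))| := by rw [h₂]; exact distToLine_mul I D A hDAne
  have hd2p : ((B 0 - A 0) * (I 1 - A 1) - (B 1 - A 1) * (I 0 - A 0)) ^ 2 = dd ^ 2 * ((A 0 - B 0) ^ 2 + (A 1 - B 1) ^ 2) := by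
    have h' := congrArg (· ^ 2) EAB
    simp only [mul_pow, sq_abs] at h'
    rw [pt_dist_sq] at h'
    exact h'.symm
  have he2q : ((C 0 - B 0) * (I 1 - B 1) - (C 1 - B 1) * (I 0 - B 0)) ^ 2 = ee ^ 2 * ((B 0 - C 0) ^ 2 + (B 1 - C 1) ^ 2) := by
    have h' := congrArg (· ^ 2) EBC
    simp only [mul_pow, sq_abs] at h'
    rw [pt_dist_sq] at h'
    exact h'.symm
  have hd2r : ((D 0 - C 0) * (I 1 - C 1) - (D 1 - C 1) * (I 0 - C 0)) ^ 2 = dd ^ 2 * ((C 0 - D 0) ^ 2 + (C 1 - D 1) ^ 2) := by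
    have h' := congrArg (· ^ 2) ECD
    simp only [mul_pow, sq_abs] at h'
    rw [pt_dist_sq] at h'
    exact h'.symm
  have he2s : ((A 0 - D 0) * (I 1 - D 1) - (A 1 - D 1) * (I 0 - D 0)) ^ 2 = ee ^ 2 * ((D 0 - A 0) ^ 2 + (D 1 - A 1) ^ 2) := by
    have h' := congrArg (· ^ 2) EDA
    simp only [mul_pow, sq_abs] at h'
    rw [pt_dist_sq] at h'
    exact h'.symm
  have hUne : ((A 0 - B 0) ^ 2 + (A 1 - B 1) ^ 2) ≠ 0 := by
    rw [← pt_dist_sq A B]; exact pow_ne_zero 2 (dist_ne_zero.2 hABne)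
  have hVne : ((B 0 - C 0) ^ 2 + (B 1 - C 1) ^ 2) ≠ 0 := by
    rw [← pt_dist_sq B C]; exact pow_ne_zero 2 (dist_ne_zero.2 hBCne)
  have hWne : ((C 0 - D 0) ^ 2 + (C 1 - D 1) ^ 2) ≠ 0 := by
    rw [← pt_dist_sq C D]; exact pow_ne_zero 2 (dist_ne_zero.2 hCDne)
  have hZne : ((D 0 - A 0) ^ 2 + (D 1 - A 1) ^ 2) ≠ 0 := by
    rw [← pt_dist_sq D A]; exact pow_ne_zero 2 (dist_ne_zero.2 hDAne)
  have hcross := cross_of_collinear hNewton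
  rw [midpoint_coord A C 0, midpoint_coord A C 1, midpoint_coord B D 0,
    midpoint_coord B D 1] at hcross
  have hAnne : ((B 0 - A 0) * (I 1 - A 1) - (B 1 - A 1) * (I 0 - A 0)) + ((D 0 - C 0) * (I 1 - C 1) - (D 1 - C 1) * (I 0 - C 0)) - ((C 0 - B 0) * (I 1 - B 1) - (C 1 - B 1) * (I 0 - B 0)) - ((A 0 - D 0) * (I 1 - D 1) - (A 1 - D 1) * (I 0 - D 0)) = 0 := by linear_combination 4 * hcross
  have hfin := core_abs ((B 0 - A 0) * (I 1 - A 1) - (B 1 - A 1) * (I 0 - A 0)) ((C 0 - B 0) * (I 1 - B 1) - (C 1 - B 1) * (I 0 - B 0)) ((D 0 - C 0) * (I 1 - C 1) - (D 1 - C 1) * (I 0 - C 0)) ((A 0 - D 0) * (I 1 - D 1) - (A 1 - D 1) * (I 0 - D 0)) ((B 0 - A 0) * (C 0 - B 0) + (B 1 - A 1) * (C 1 - B 1)) ((B 0 - A 0) * (C 1 - B 1) - (B 1 - A 1) * (C 0 - B 0)) ((C 0 - B 0) * (D 0 - C 0) + (C 1 - B 1) * (D 1 - C 1)) ((C 0 -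 B 0) * (D 1 - C 1) - (C 1 - B 1) * (D 0 - C 0)) ((D 0 - C 0) * (A 0 - D 0) + (D 1 - C 1) * (A 1 - D 1)) ((D 0 - C 0) * (A 1 - D 1) - (D 1 - C 1) * (A 0 - D 0))
    ((A 0 - D 0) * (B 0 - A 0) + (A 1 - D 1) * (B 1 - A 1)) ((A 0 - D 0) * (B 1 - A 1) - (A 1 - D 1) * (B 0 - A 0)) ((A 0 - B 0) ^ 2 + (A 1 - B 1) ^ 2) ((B 0 - C 0) ^ 2 + (B 1 - C 1) ^ 2) ((C 0 - D 0) ^ 2 + (C 1 - D 1) ^ 2) ((D 0 - A 0) ^ 2 + (D 1 - A 1) ^ 2) (dd ^ 2) (ee ^ 2) ((B 0 - A 0) * (D 1 - C 1) - (B 1 - A 1) * (D 0 - C 0)) ((C 0 - B 0) * (A 1 - D 1) - (C 1 - B 1) * (A 0 - D 0)) hUne hVne hWne hZne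
    (by ring) (by ring) (by ring) (by ring) (by ring) (by ring)
    hd2p hd2r he2q he2s hAnne
  rcases mul_eq_zero.1 hfin with h' | hS24
  · rcases mul_eq_zero.1 h' with h'' | hS13
    · rcases mul_eq_zero.1 h'' with hde | hSS
      · -- tangential case
        left
        have hd0 : (0:ℝ) ≤ dd := Metric.infDist_nonneg
        have he0 : (0:ℝ) ≤ ee := Metric.infDist_nonneg
        have heq : ee = dd := sq_eq_of_nonneg he0 hd0 (by linarith [sub_eq_zero.1 hde])
        refine ⟨I, hI, heq.symm, ?_, ?_⟩
        · rw [← h₁]; exact heq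
        · rw [← h₁, ← h₂]; exact heq.symm
      · -- concyclic case
        right
        have hΔ : (B 0 - A 0) * (C 1 - A 1) - (B 1 - A 1) * (C 0 - A 0) ≠ 0 :=
          fun hz => hncABC (collinear_of_cross hz)
        obtain ⟨o0, o1, hOB, hOC, hOD⟩ := circum_scalar (A 0) (A 1) (B 0) (B 1)
          (C 0) (C 1) (D 0) (D 1) hΔ (by linear_combination hSS)
        refine ⟨(WithLp.equiv 2 (Fin 2 → ℝ)).symm ![o0, o1], _, rfl, ?_, ?_, ?_⟩
        · apply sq_eq_of_nonneg dist_nonneg dist_nonneg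
          rw [pt_dist_sq, pt_dist_sq]
          exact hOB
        · apply sq_eq_of_nonneg dist_nonneg dist_nonneg
          rw [pt_dist_sq, pt_dist_sq]
          exact hOC
        · apply sq_eq_of_nonneg dist_nonneg dist_nonneg
          rw [pt_dist_sq, pt_dist_sq]
          exact hOD
    · -- AB parallel CD : contradiction
      exact absurd (parallel_of_cross hABne hCDne hS13) hnpar₁
  · -- AD parallel BC : contradiction
    exact absurd (parallel_of_cross (Ne.symm hDAne) hBCne (by linear_combination hS24)) hnpar₂
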